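/- Let n ≥ 2 be an integer and let f ∈ C_c^∞(ℝⁿ, ℂ). Then for every s ∈ ℝ and every ω ∈ S^{n−1}, R(Δf)(s, ω) = ∂²/∂s² (Rf)(s, ω), where Δf = ∑_{j=1}^n ∂²f/∂x_j². In other words, the Radon transform intertwines the n-dimensional Laplacian with the one-dimensional operator ∂_s². -/

import Mathlib

open MeasureTheory RealInnerProductSpace

/-- The Radon transform: integral of `f` over the hyperplane `{x : ⟪x, ω⟫ = s}`,
realized as the integral over the orthogonal complement of `ω`. -/
noncomputable def radon {n : ℕ} (f : EuclideanSpace ℝ (Fin n) → ℂ) (s : ℝ)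
    (ω : EuclideanSpace ℝ (Fin n)) : ℂ :=
  ∫ y : ((ℝ ∙ ω)ᗮ : Submodule ℝ (EuclideanSpace ℝ (Fin n))),
    f (s • ω + (y : EuclideanSpace ℝ (Fin n)))


/-- The (negative, i.e. sum-of-second-partials) Laplacian `∑ⱼ ∂²f/∂xⱼ²`. -/
noncomputable def lap {n : ℕ} {F : Type*} [NormedAddCommGroup F] [NormedSpace ℝ F]
    (f : EuclideanSpace ℝ (Fin n) → F) (x : EuclideanSpace ℝ (Fin n)) : F :=
  ∑ j : Fin n, iteratedFDeriv ℝ 2 f x ![EuclideanSpace.single j 1, EuclideanSpace.single j 1]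

namespace RadonAux

lemma bilin_sum_sum {E F : Type*} [NormedAddCommGroup E] [InnerProductSpace ℝ E]
    [NormedAddCommGroup F] [NormedSpace ℝ F] {ι κ : Type*} [Fintype ι] [Fintype κ]
    (B : E →L[ℝ] E →L[ℝ] F) (v : ι → E) (w : κ → E) :
    B (∑ j, v j) (∑ k, w k) = ∑ j, ∑ k, B (v j) (w k) := by
  rw [map_sum]
  rw [show ∑ x : κ, B (∑ j, v j) (w x) = ∑ x : κ, ∑ j, B (v j) (w x) from
    Finset.sum_congr rfl fun x _ => by rw [map_sum, ContinuousLinearMap.sum_apply]]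
  exact Finset.sum_comm

/-- trace of a bilinear form w.r.t. an orthonormal basis is basis independent -/
lemma sum_bilin_ob {E F : Type*} [NormedAddCommGroup E] [InnerProductSpace ℝ E]
    [NormedAddCommGroup F] [NormedSpace ℝ F] {ι κ : Type*} [Fintype ι] [Fintype κ]
    [DecidableEq κ]
    (b : OrthonormalBasis ι ℝ E) (c : OrthonormalBasis κ ℝ E)
    (B : E →L[ℝ] E →L[ℝ] F) :
    ∑ i, B (b i) (b i) = ∑ j, B (c j) (c j) := by
  have h1 : ∀ i, B (b i) (b i) = ∑ j, ∑ k, (⟪c j, b i⟫ * ⟪c k, b i⟫) • B (c j) (c k) := by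
    intro i
    conv_lhs => rw [← c.sum_repr' (b i)]
    rw [bilin_sum_sum]
    refine Finset.sum_congr rfl fun j _ => Finset.sum_congr rfl fun k _ => ?_
    rw [_root_.map_smul B, ContinuousLinearMap.smul_apply, _root_.map_smul, smul_smul, mul_comm]
  simp_rw [h1]
  rw [Finset.sum_comm]
  have h2 : ∀ j k, ∑ i, (⟪c j, b i⟫ * ⟪c k, b i⟫) = if j = k then (1:ℝ) else 0 := by
    intro j k
    rw [← orthonormal_iff_ite.1 c.orthonormal, ← b.sum_inner_mul_inner (c j) (c k)]
    exact Finset.sum_congr rfl fun i _ => by rw [real_inner_comm (c k) (b i)]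
  calc ∑ j, ∑ i, ∑ k, (⟪c j, b i⟫ * ⟪c k, b i⟫) • B (c j) (c k)
      = ∑ j, ∑ k, (∑ i, ⟪c j, b i⟫ * ⟪c k, b i⟫) • B (c j) (c k) := by
        refine Finset.sum_congr rfl fun j _ => ?_
        rw [Finset.sum_comm]
        simp_rw [Finset.sum_smul]
    _ = ∑ j, B (c j) (c j) := by
        refine Finset.sum_congr rfl fun j _ => ?_
        simp_rw [h2]
        simp [ite_smul]

variable {n : ℕ} {ω : EuclideanSpace ℝ (Fin n)}

lemma norm_coe_le (s : ℝ) (y : ((ℝ ∙ ω)ᗮ : Submodule ℝ (EuclideanSpace ℝ (Fin n)))) :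
    ‖(y : EuclideanSpace ℝ (Fin n))‖ ≤ ‖s • ω + (y : EuclideanSpace ℝ (Fin n))‖ := by
  have h0 : ⟪s • ω, (y : EuclideanSpace ℝ (Fin n))⟫ = 0 :=
    y.2 (s • ω) (Submodule.smul_mem _ s (Submodule.mem_span_singleton_self ω))
  nlinarith [norm_add_sq_real (s • ω) (y : EuclideanSpace ℝ (Fin n)),
    norm_nonneg (s • ω + (y : EuclideanSpace ℝ (Fin n))),
    norm_nonneg (y : EuclideanSpace ℝ (Fin n)), norm_nonneg (s • ω), h0]

lemma comp_eq_zero {g : EuclideanSpace ℝ (Fin n) → ℂ} {R : ℝ}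
    (hR : tsupport g ⊆ Metric.closedBall 0 R) (s : ℝ) :
    ∀ y : ((ℝ ∙ ω)ᗮ : Submodule ℝ (EuclideanSpace ℝ (Fin n))),
      y ∉ Metric.closedBall (0 : ((ℝ ∙ ω)ᗮ : Submodule ℝ (EuclideanSpace ℝ (Fin n)))) R →
        g (s • ω + (y : EuclideanSpace ℝ (Fin n))) = 0 := by
  intro y hy
  apply image_eq_zero_of_notMem_tsupport
  intro hmem
  apply hy
  have h2 : ‖s • ω + (y : EuclideanSpace ℝ (Fin n))‖ ≤ R := by
    simpa [dist_zero_right] using hR hmem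
  simp only [Metric.mem_closedBall, dist_zero_right]
  exact (norm_coe_le s y).trans h2

lemma comp_hcs {g : EuclideanSpace ℝ (Fin n) → ℂ} {R : ℝ}
    (hR : tsupport g ⊆ Metric.closedBall 0 R) (s : ℝ) :
    HasCompactSupport (fun y : ((ℝ ∙ ω)ᗮ : Submodule ℝ (EuclideanSpace ℝ (Fin n))) =>
      g (s • ω + (y : EuclideanSpace ℝ (Fin n)))) :=
  HasCompactSupport.intro (isCompact_closedBall _ R) (comp_eq_zero hR s)

lemma comp_integrable {g : EuclideanSpace ℝ (Fin n) → ℂ} {R : ℝ} (hg : Continuous g)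
    (hR : tsupport g ⊆ Metric.closedBall 0 R) (s : ℝ) :
    Integrable (fun y : ((ℝ ∙ ω)ᗮ : Submodule ℝ (EuclideanSpace ℝ (Fin n))) =>
      g (s • ω + (y : EuclideanSpace ℝ (Fin n)))) :=
  (hg.comp (continuous_const.add continuous_subtype_val)).integrable_of_hasCompactSupport
    (comp_hcs hR s)

/-- directional derivative function -/
noncomputable def dg (g : EuclideanSpace ℝ (Fin n) → ℂ) (v : EuclideanSpace ℝ (Fin n))
    (x : EuclideanSpace ℝ (Fin n)) : ℂ := fderiv ℝ g x v

lemma dg_contDiff {g : EuclideanSpace ℝ (Fin n) → ℂ} (hg : ContDiff ℝ (⊤ : ℕ∞) g)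
    (v : EuclideanSpace ℝ (Fin n)) : ContDiff ℝ (⊤ : ℕ∞) (dg g v) :=
  (hg.fderiv_right (by simp)).clm_apply contDiff_const

lemma dg_tsupport {g : EuclideanSpace ℝ (Fin n) → ℂ} (v : EuclideanSpace ℝ (Fin n)) :
    tsupport (dg g v) ⊆ tsupport g := by
  apply closure_minimal _ (isClosed_tsupport g)
  intro x hx
  have : fderiv ℝ g x ≠ 0 := by
    intro h; apply hx; simp [dg, h]
  exact support_fderiv_subset (𝕜 := ℝ) (f := g) this

lemma dg_hcs {g : EuclideanSpace ℝ (Fin n) → ℂ} (hgc : HasCompactSupport g)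
    (v : EuclideanSpace ℝ (Fin n)) : HasCompactSupport (dg g v) :=
  HasCompactSupport.of_support_subset_isCompact hgc.isCompact
    ((subset_closure).trans (dg_tsupport v))

lemma fderiv_dg {g : EuclideanSpace ℝ (Fin n) → ℂ} (hg : ContDiff ℝ (⊤ : ℕ∞) g)
    (v x : EuclideanSpace ℝ (Fin n)) :
    fderiv ℝ (dg g v) x = (fderiv ℝ (fderiv ℝ g) x).flip v := by
  have hdiff : DifferentiableAt ℝ (fderiv ℝ g) x :=
    ((hg.fderiv_right (m := 1) (WithTop.coe_le_coe.2 le_top)).differentiable one_ne_zero).differentiableAt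
  rw [show dg g v = fun y => (fderiv ℝ g y) v from rfl,
    fderiv_clm_apply hdiff (differentiableAt_const v)]
  simp

lemma Q_eq {g : EuclideanSpace ℝ (Fin n) → ℂ} (hg : ContDiff ℝ (⊤ : ℕ∞) g)
    (v x : EuclideanSpace ℝ (Fin n)) :
    dg (dg g v) v x = fderiv ℝ (fderiv ℝ g) x v v := by
  show fderiv ℝ (dg g v) x v = _
  rw [fderiv_dg hg]
  rfl

lemma hasDerivAt_int {g : EuclideanSpace ℝ (Fin n) → ℂ} {R : ℝ}
    (hg : ContDiff ℝ (⊤ : ℕ∞) g) (hgc : HasCompactSupport g)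
    (hR : tsupport g ⊆ Metric.closedBall 0 R) (s : ℝ) :
    HasDerivAt (fun t => ∫ y : ((ℝ ∙ ω)ᗮ : Submodule ℝ (EuclideanSpace ℝ (Fin n))),
        g (t • ω + (y : EuclideanSpace ℝ (Fin n))))
      (∫ y : ((ℝ ∙ ω)ᗮ : Submodule ℝ (EuclideanSpace ℝ (Fin n))),
        dg g ω (s • ω + (y : EuclideanSpace ℝ (Fin n)))) s := by
  obtain ⟨C, hC⟩ := (hg.continuous_fderiv (by simp)).bounded_above_of_compact_support
    (hgc.fderiv (𝕜 := ℝ))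
  set V := ((ℝ ∙ ω)ᗮ : Submodule ℝ (EuclideanSpace ℝ (Fin n)))
  set bound : V → ℝ := (Metric.closedBall (0 : V) R).indicator (fun _ => C * ‖ω‖) with hbdef
  have hR' : tsupport (dg g ω) ⊆ Metric.closedBall 0 R := (dg_tsupport ω).trans hR
  refine (hasDerivAt_integral_of_dominated_loc_of_deriv_le (F := fun t (y : V) =>
      g (t • ω + (y : EuclideanSpace ℝ (Fin n)))) (F' := fun t (y : V) =>
      dg g ω (t • ω + (y : EuclideanSpace ℝ (Fin n)))) (bound := bound) (𝕜 := ℝ)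
      (Metric.ball_mem_nhds s zero_lt_one) ?_ ?_ ?_ ?_ ?_ ?_).2
  · exact Filter.Eventually.of_forall fun t =>
      (hg.continuous.comp (continuous_const.add continuous_subtype_val)).aestronglyMeasurable
  · exact comp_integrable hg.continuous hR s
  · exact ((dg_contDiff hg ω).continuous.comp
      (continuous_const.add continuous_subtype_val)).aestronglyMeasurable
  · refine Filter.Eventually.of_forall fun y => fun t _ => ?_
    show ‖dg g ω (t • ω + (y : EuclideanSpace ℝ (Fin n)))‖ ≤ bound y
    by_cases hy : y ∈ Metric.closedBall (0 : V) R
    · rw [hbdef, Set.indicator_of_mem hy]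
      calc ‖dg g ω (t • ω + (y : EuclideanSpace ℝ (Fin n)))‖
          ≤ ‖fderiv ℝ g (t • ω + (y : EuclideanSpace ℝ (Fin n)))‖ * ‖ω‖ :=
            ContinuousLinearMap.le_opNorm _ ω
        _ ≤ C * ‖ω‖ := mul_le_mul_of_nonneg_right (hC _) (norm_nonneg ω)
    · rw [hbdef, Set.indicator_of_notMem hy, comp_eq_zero hR' t y hy, norm_zero]
  · rw [hbdef]
    exact (integrableOn_const measure_closedBall_lt_top.ne).integrable_indicator
      Metric.isClosed_closedBall.measurableSet
  · refine Filter.Eventually.of_forall fun y => fun t _ => ?_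
    have hd : HasDerivAt (fun t : ℝ => t • ω + (y : EuclideanSpace ℝ (Fin n))) ω t := by
      simpa using ((hasDerivAt_id t).smul_const ω).add_const (y : EuclideanSpace ℝ (Fin n))
    exact ((hg.differentiable (by simp) _).hasFDerivAt).comp_hasDerivAt t hd

lemma integral_tangent_eq_zero {g : EuclideanSpace ℝ (Fin n) → ℂ} {R : ℝ}
    (hg : ContDiff ℝ (⊤ : ℕ∞) g) (hR : tsupport g ⊆ Metric.closedBall 0 R) (s : ℝ)
    {v : EuclideanSpace ℝ (Fin n)} (hv : v ∈ (ℝ ∙ ω)ᗮ) :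
    ∫ y : ((ℝ ∙ ω)ᗮ : Submodule ℝ (EuclideanSpace ℝ (Fin n))),
      dg (dg g v) v (s • ω + (y : EuclideanSpace ℝ (Fin n))) = 0 := by
  set V := ((ℝ ∙ ω)ᗮ : Submodule ℝ (EuclideanSpace ℝ (Fin n)))
  set h : V → ℂ := fun y => dg g v (s • ω + (y : EuclideanSpace ℝ (Fin n))) with hh
  set h' : V → ℂ := fun y => dg (dg g v) v (s • ω + (y : EuclideanSpace ℝ (Fin n))) with hh'
  have hline : ∀ y : V, HasLineDerivAt ℝ h (h' y) y ⟨v, hv⟩ := by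
    intro y
    have haff : HasDerivAt (fun t : ℝ => (s • ω + (y : EuclideanSpace ℝ (Fin n))) + t • v) v 0 := by
      simpa using (((hasDerivAt_id (0:ℝ)).smul_const v).const_add
        (s • ω + (y : EuclideanSpace ℝ (Fin n))))
    have key : HasDerivAt
        (fun t : ℝ => dg g v ((s • ω + (y : EuclideanSpace ℝ (Fin n))) + t • v))
        (fderiv ℝ (dg g v) (s • ω + (y : EuclideanSpace ℝ (Fin n))) v) 0 := by
      have := (((dg_contDiff hg v).differentiable (by simp) _).hasFDerivAt).comp_hasDerivAt 0 haff
      rw [zero_smul, add_zero] at this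
      exact this
    have heq : (fun t : ℝ => h (y + t • (⟨v, hv⟩ : V))) =
        fun t : ℝ => dg g v ((s • ω + (y : EuclideanSpace ℝ (Fin n))) + t • v) := by
      funext t
      simp only [hh, Submodule.coe_add, SetLike.val_smul, add_assoc]
    show HasDerivAt (fun t : ℝ => h (y + t • (⟨v, hv⟩ : V))) (h' y) 0
    rw [heq]
    exact key
  have hconst : ∀ y : V, HasLineDerivAt ℝ (fun _ : V => (1:ℂ)) ((fun _ : V => (0:ℂ)) y) y
      ⟨v, hv⟩ := fun y => hasDerivAt_const 0 1
  have int2 : Integrable (fun y : V => (ContinuousLinearMap.mul ℝ ℂ) ((1:ℂ)) (h' y)) := by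
    simpa using comp_integrable (g := dg (dg g v) v)
      ((dg_contDiff (dg_contDiff hg v) v).continuous)
      (((dg_tsupport v).trans (dg_tsupport v)).trans hR) s
  have int3 : Integrable (fun y : V => (ContinuousLinearMap.mul ℝ ℂ) ((1:ℂ)) (h y)) := by
    simpa using comp_integrable (g := dg g v) ((dg_contDiff hg v).continuous)
      ((dg_tsupport v).trans hR) s
  have int1 : Integrable (fun y : V => (ContinuousLinearMap.mul ℝ ℂ) ((0:ℂ)) (h y)) := by
    simpa using integrable_zero V ℂ (volume : Measure V)
  have := integral_bilinear_hasLineDerivAt_right_eq_neg_left_of_integrable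
    (μ := (volume : Measure V)) (B := ContinuousLinearMap.mul ℝ ℂ)
    (f := fun _ : V => (1:ℂ)) (f' := fun _ : V => (0:ℂ)) (g := h) (g' := h') (v := ⟨v, hv⟩)
    int1 int2 int3 (fun y _ => hconst y) (fun y _ => hline y)
  simpa using this

end RadonAux

open RadonAux in
/-- The Radon transform intertwines the n-dimensional Laplacian with ∂_s². -/
theorem radon_intertwines_laplacian (n : ℕ) (hn : 2 ≤ n)
    (f : EuclideanSpace ℝ (Fin n) → ℂ) (hf : ContDiff ℝ (⊤ : ℕ∞) f) (hfc : HasCompactSupport f) :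
    ∀ (s : ℝ) (ω : EuclideanSpace ℝ (Fin n)), ‖ω‖ = 1 →
      radon (lap f) s ω = iteratedDeriv 2 (fun s' => radon f s' ω) s := by
  intro s ω hω
  classical
  obtain ⟨R, hR⟩ : ∃ R, tsupport f ⊆ Metric.closedBall 0 R :=
    hfc.isBounded.subset_closedBall 0
  -- orthonormal basis containing ω
  have hons : Orthonormal ℝ ((↑) : ({ω} : Set (EuclideanSpace ℝ (Fin n))) →
      EuclideanSpace ℝ (Fin n)) := by
    constructor
    · rintro ⟨x, hx⟩
      simp only [Set.mem_singleton_iff] at hx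
      simpa [hx] using hω
    · rintro ⟨x, hx⟩ ⟨y, hy⟩ hxy
      exact absurd (Subtype.ext (hx.trans hy.symm)) hxy
  obtain ⟨u, b, hωu, hb⟩ := hons.exists_orthonormalBasis_extension
  have hωmem : ω ∈ u := hωu rfl
  set i0 : {x // x ∈ u} := ⟨ω, hωmem⟩ with hi0
  have hbω : b i0 = ω := by rw [hb]
  have hmemV : ∀ i : {x // x ∈ u}, i ≠ i0 → (i : EuclideanSpace ℝ (Fin n)) ∈ (ℝ ∙ ω)ᗮ := by
    intro i hi
    rw [Submodule.mem_orthogonal_singleton_iff_inner_right]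
    have := orthonormal_iff_ite.1 b.orthonormal i0 i
    rw [hbω, hb] at this
    rw [this, if_neg (fun h => hi h.symm)]
  -- pointwise Laplacian decomposition
  have hlapeq : ∀ x, lap f x = dg (dg f ω) ω x +
      ∑ i ∈ Finset.univ.erase i0, dg (dg f (i : EuclideanSpace ℝ (Fin n)))
        (i : EuclideanSpace ℝ (Fin n)) x := by
    intro x
    have e1 : lap f x = ∑ j : Fin n, fderiv ℝ (fderiv ℝ f) x
        ((EuclideanSpace.basisFun (Fin n) ℝ) j) ((EuclideanSpace.basisFun (Fin n) ℝ) j) := by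
      unfold lap
      refine Finset.sum_congr rfl fun j _ => ?_
      rw [iteratedFDeriv_two_apply]
      simp [EuclideanSpace.basisFun_apply]
    rw [e1, sum_bilin_ob (EuclideanSpace.basisFun (Fin n) ℝ) b (fderiv ℝ (fderiv ℝ f) x)]
    rw [← Finset.add_sum_erase _ _ (Finset.mem_univ i0)]
    congr 1
    · rw [hbω, Q_eq hf]
    · refine Finset.sum_congr rfl fun i _ => ?_
      rw [hb, Q_eq hf]
  -- support bounds
  have hR1 : tsupport (dg f ω) ⊆ Metric.closedBall 0 R := (dg_tsupport ω).trans hR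
  -- RHS
  have hd1 : deriv (fun t => radon f t ω) = fun t =>
      ∫ y : ((ℝ ∙ ω)ᗮ : Submodule ℝ (EuclideanSpace ℝ (Fin n))),
        dg f ω (t • ω + (y : EuclideanSpace ℝ (Fin n))) := by
    funext t
    exact (hasDerivAt_int hf hfc hR t).deriv
  have hd2 : deriv (fun t =>
      ∫ y : ((ℝ ∙ ω)ᗮ : Submodule ℝ (EuclideanSpace ℝ (Fin n))),
        dg f ω (t • ω + (y : EuclideanSpace ℝ (Fin n)))) s =
      ∫ y : ((ℝ ∙ ω)ᗮ : Submodule ℝ (EuclideanSpace ℝ (Fin n))),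
        dg (dg f ω) ω (s • ω + (y : EuclideanSpace ℝ (Fin n))) :=
    (hasDerivAt_int (dg_contDiff hf ω) (dg_hcs hfc ω) hR1 s).deriv
  have hRHS : iteratedDeriv 2 (fun s' => radon f s' ω) s =
      ∫ y : ((ℝ ∙ ω)ᗮ : Submodule ℝ (EuclideanSpace ℝ (Fin n))),
        dg (dg f ω) ω (s • ω + (y : EuclideanSpace ℝ (Fin n))) := by
    rw [show (2:ℕ) = 1 + 1 from rfl, iteratedDeriv_succ, iteratedDeriv_one]
    rw [hd1, hd2]
  rw [hRHS]
  -- LHS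
  have hint : ∀ v : EuclideanSpace ℝ (Fin n), Integrable (fun y :
      ((ℝ ∙ ω)ᗮ : Submodule ℝ (EuclideanSpace ℝ (Fin n))) =>
      dg (dg f v) v (s • ω + (y : EuclideanSpace ℝ (Fin n)))) := by
    intro v
    exact comp_integrable ((dg_contDiff (dg_contDiff hf v) v).continuous)
      (((dg_tsupport v).trans (dg_tsupport v)).trans hR) s
  calc radon (lap f) s ω
      = ∫ y : ((ℝ ∙ ω)ᗮ : Submodule ℝ (EuclideanSpace ℝ (Fin n))),
          (dg (dg f ω) ω (s • ω + (y : EuclideanSpace ℝ (Fin n))) +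
            ∑ i ∈ Finset.univ.erase i0, dg (dg f (i : EuclideanSpace ℝ (Fin n)))
              (i : EuclideanSpace ℝ (Fin n)) (s • ω + (y : EuclideanSpace ℝ (Fin n)))) := by
        rw [radon]
        congr 1
        funext y
        exact hlapeq _
    _ = (∫ y : ((ℝ ∙ ω)ᗮ : Submodule ℝ (EuclideanSpace ℝ (Fin n))),
          dg (dg f ω) ω (s • ω + (y : EuclideanSpace ℝ (Fin n)))) +
        ∑ i ∈ Finset.univ.erase i0, ∫ y :
            ((ℝ ∙ ω)ᗮ : Submodule ℝ (EuclideanSpace ℝ (Fin n))),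
          dg (dg f (i : EuclideanSpace ℝ (Fin n)))
            (i : EuclideanSpace ℝ (Fin n)) (s • ω + (y : EuclideanSpace ℝ (Fin n))) := by
        rw [integral_add (hint ω) (integrable_finset_sum _ fun i _ => hint _),
          integral_finset_sum _ fun i _ => hint _]
    _ = ∫ y : ((ℝ ∙ ω)ᗮ : Submodule ℝ (EuclideanSpace ℝ (Fin n))),
          dg (dg f ω) ω (s • ω + (y : EuclideanSpace ℝ (Fin n))) := by
        rw [Finset.sum_eq_zero, add_zero]
        intro i hi
        exact integral_tangent_eq_zero hf hR s (hmemV i (Finset.mem_erase.1 hi).1)
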